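/- arXiv:1706.06342 — 2 statements merged into one kernel-verified Lean document; each statement's English description precedes it below -/
import Mathlib

section
/- Dichotomy theorem for abelian semigroup actions: let (T,X) be a syndetically transitive topological semiflow on a compact Hausdorff space X with T an abelian topological monoid. Then (T,X) is either minimal and equicontinuous, or sensitive to initial conditions. -/
open Filter Topology Set Uniformity

/-- A subset `B` of a topological monoid `T` is *syndetic* if there is a compact set
`K ⊆ T` such that `K·t` meets `B` for every `t ∈ T`. -/
def Syndetic {T : Type*} [Monoid T] [TopologicalSpace T] (B : Set T) : Prop :=
  ∃ K : Set T, IsCompact K ∧ ∀ t : T, ∃ k ∈ K, k * t ∈ B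

/-- The hitting-time set `N_T(U,V) = {t ∈ T : ∃ x ∈ U, t • x ∈ V}`. -/
def HittingTimes (T : Type*) {X : Type*} [Monoid T] [MulAction T X] (U V : Set X) : Set T :=
  {t : T | ∃ x ∈ U, t • x ∈ V}

/-!
If the system is not sensitive, every entourage `α` admits a nonempty open set `Z` whose points
stay `α`-close along whole orbits. Syndetic transitivity then makes every orbit dense: a time `s`
carrying a point of `Z` near `x`, followed by a time `k` from a compact set carrying `Z` near `w`,
puts `k • x` near `w`, because compact sets of times act equicontinuously.
Once orbits are dense, commutativity spreads the stability at one point of `Z` over a dense orbit,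
so the times `s` with `s • z` close to `z` uniformly in `z` form a syndetic set. Composing two
such uniform returns with the equicontinuity of a compact set of times gives equicontinuity of
the whole action.
-/

open UniformSpace MulAction

section Dichotomy

variable (T X : Type*) [Monoid T] [UniformSpace X] [MulAction T X]

def IsSyndeticallyTransitive [TopologicalSpace T] : Prop :=
  ∀ U V : Set X, IsOpen U → U.Nonempty → IsOpen V → V.Nonempty → Syndetic (HittingTimes T U V)

def IsSensitive : Prop :=
  ∃ ε ∈ 𝓤 X, ∀ x : X, ∀ V ∈ 𝓝 x, ∃ y ∈ V, ∃ t : T, (t • x, t • y) ∉ ε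

variable {T X}

theorem exists_isOpen_forall_smul_mem_of_not_isSensitive (hns : ¬IsSensitive T X)
    {α : SetRel X X} (hα : α ∈ 𝓤 X) :
    ∃ Z : Set X, IsOpen Z ∧ Z.Nonempty ∧ ∀ z ∈ Z, ∀ z' ∈ Z, ∀ t : T, (t • z, t • z') ∈ α := by
  obtain ⟨η, hη, hηsymm, hηα⟩ := comp_symm_mem_uniformity_sets hα
  obtain ⟨x, V, hV, hstable⟩ : ∃ x : X, ∃ V ∈ 𝓝 x, ∀ y ∈ V, ∀ t : T, (t • x, t • y) ∈ η := by
    unfold IsSensitive at hns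
    push Not at hns
    exact hns η hη
  refine ⟨interior V, isOpen_interior, ⟨x, mem_interior_iff_mem_nhds.2 hV⟩, ?_⟩
  intro z hz z' hz' t
  exact hηα ⟨t • x, hηsymm.symm _ _ (hstable z (interior_subset hz) t),
    hstable z' (interior_subset hz') t⟩

theorem exists_finset_smul_mem_of_dense_orbit [CompactSpace X] [ContinuousConstSMul T X]
    (hmin : ∀ x : X, Dense (orbit T x)) {W : Set X} (hW : IsOpen W) (hWne : W.Nonempty) :
    ∃ F : Finset T, ∀ x : X, ∃ σ ∈ F, σ • x ∈ W := by
  have hcover : univ ⊆ ⋃ σ : T, (σ • ·) ⁻¹' W := fun x _ => by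
    obtain ⟨_, ⟨σ, rfl⟩, hσ⟩ := (hmin x).exists_mem_open hW hWne
    exact mem_iUnion.2 ⟨σ, hσ⟩
  obtain ⟨F, hF⟩ := isCompact_univ.elim_finite_subcover _
    (fun σ : T => hW.preimage (continuous_const_smul σ)) hcover
  exact ⟨F, fun x => by simpa using hF (mem_univ x)⟩

variable [TopologicalSpace T]

theorem Syndetic.nonempty {B : Set T} (hB : Syndetic B) : B.Nonempty :=
  let ⟨_, _, hK⟩ := hB
  let ⟨k, _, hk⟩ := hK 1
  ⟨k * 1, hk⟩

theorem Syndetic.mono {B C : Set T} (hB : Syndetic B) (hBC : B ⊆ C) : Syndetic C :=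
  let ⟨K, hK, hKB⟩ := hB
  ⟨K, hK, fun t => let ⟨k, hk, hkt⟩ := hKB t; ⟨k, hk, hBC hkt⟩⟩

theorem IsSyndeticallyTransitive.syndetic_hittingTimes_of_mem_nhds
    (h : IsSyndeticallyTransitive T X) {U V : Set X} (hU : IsOpen U) (hUne : U.Nonempty)
    {y : X} (hV : V ∈ 𝓝 y) : Syndetic (HittingTimes T U V) :=
  (h U (interior V) hU hUne isOpen_interior ⟨y, mem_interior_iff_mem_nhds.2 hV⟩).mono
    fun _ ⟨x, hx, htx⟩ => ⟨x, hx, interior_subset htx⟩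

theorem IsCompact.equicontinuous_smul [ContinuousSMul T X] {K : Set T} (hK : IsCompact K) :
    Equicontinuous fun k : K => ((k : T) • · : X → X) := by
  intro x U hU
  have hcont : ∀ k ∈ K, ∀ᶠ p : X × T in 𝓝 (x, k), (p.2 • x, p.2 • p.1) ∈ U := fun k _ =>
    ((continuous_snd.smul continuous_const).prodMk (continuous_snd.smul continuous_fst)).tendsto
      (x, k) |>.mono_right (nhds_le_uniformity _) hU
  exact (hK.eventually_forall_of_forall_eventually (P := fun y k => (k • x, k • y) ∈ U) hcont).mono
    fun y hy k => hy k k.2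

theorem IsCompact.uniformEquicontinuous_smul [CompactSpace X] [ContinuousSMul T X] {K : Set T}
    (hK : IsCompact K) : UniformEquicontinuous fun k : K => ((k : T) • · : X → X) :=
  CompactSpace.uniformEquicontinuous_of_equicontinuous hK.equicontinuous_smul

theorem dense_orbit_of_isSyndeticallyTransitive [CompactSpace X] [ContinuousSMul T X]
    (hsynd : IsSyndeticallyTransitive T X) (hns : ¬IsSensitive T X) (x : X) :
    Dense (orbit T x) := by
  refine fun w => mem_closure_iff_ball.2 fun {α₀} hα₀ => ?_
  obtain ⟨α, hα, hαsymm, hαα₀⟩ := comp_comp_symm_mem_uniformity_sets hα₀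
  obtain ⟨Z, hZ, hZne, hZα⟩ := exists_isOpen_forall_smul_mem_of_not_isSensitive hns hα
  obtain ⟨K, hK, hKw⟩ := hsynd.syndetic_hittingTimes_of_mem_nhds hZ hZne (ball_mem_nhds w hα)
  obtain ⟨γ, hγ, hγα⟩ := (hK.uniformEquicontinuous_smul α hα).exists_mem
  obtain ⟨s, z₁, hz₁, hsz₁⟩ :=
    (hsynd.syndetic_hittingTimes_of_mem_nhds hZ hZne (ball_mem_nhds x hγ)).nonempty
  obtain ⟨k, hk, z₂, hz₂, hksz₂⟩ := hKw s
  have h₁ : (w, (k * s) • z₂) ∈ α := hksz₂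
  have h₂ : ((k * s) • z₂, (k * s) • z₁) ∈ α := hZα z₂ hz₂ z₁ hz₁ (k * s)
  have h₃ : ((k * s) • z₁, k • x) ∈ α := by
    rw [mul_smul]
    exact hαsymm.symm _ _ (hγα (x, s • z₁) hsz₁ ⟨k, hk⟩)
  exact ⟨k • x, hαα₀ ⟨_, ⟨_, h₁, h₂⟩, h₃⟩, mem_orbit x k⟩

theorem uniformEquicontinuous_smul_of_syndetic [CompactSpace X] [ContinuousSMul T X]
    (h : ∀ ε ∈ 𝓤 X, Syndetic {s : T | ∀ z : X, (z, s • z) ∈ ε}) :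
    UniformEquicontinuous fun t : T => (t • · : X → X) := by
  intro ε hε
  obtain ⟨ε₁, hε₁, hε₁symm, hε₁ε⟩ := comp_comp_symm_mem_uniformity_sets hε
  obtain ⟨K₁, hK₁, hK₁ε₁⟩ := h ε₁ hε₁
  obtain ⟨β, hβ, hβε₁⟩ := (hK₁.uniformEquicontinuous_smul ε₁ hε₁).exists_mem
  obtain ⟨δ, hδ, hδsymm, hδβ⟩ := comp_comp_symm_mem_uniformity_sets hβ
  obtain ⟨K₂, -, hK₂δ⟩ := h δ hδ
  refine mem_of_superset hδ fun ⟨x, y⟩ hxy t => ?_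
  obtain ⟨k₂, -, hk₂t⟩ := hK₂δ t
  obtain ⟨k₁, hk₁, hk₁k₂⟩ := hK₁ε₁ k₂
  simp only [mem_ofPred_eq, mul_smul] at hk₂t hk₁k₂
  have hβ_close : (k₂ • t • x, k₂ • t • y) ∈ β :=
    hδβ ⟨_, ⟨_, hδsymm.symm _ _ (hk₂t x), hxy⟩, hk₂t y⟩
  have h₁ : (t • x, k₁ • k₂ • t • x) ∈ ε₁ := hk₁k₂ _
  have h₂ : (k₁ • k₂ • t • x, k₁ • k₂ • t • y) ∈ ε₁ := hβε₁ _ hβ_close ⟨k₁, hk₁⟩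
  have h₃ : (k₁ • k₂ • t • y, t • y) ∈ ε₁ := hε₁symm.symm _ _ (hk₁k₂ _)
  exact hε₁ε ⟨_, ⟨_, h₁, h₂⟩, h₃⟩

end Dichotomy

theorem syndetic_setOf_forall_mem_smul_of_dense_orbit {T X : Type*} [CommMonoid T]
    [TopologicalSpace T] [UniformSpace X] [CompactSpace X] [MulAction T X]
    [ContinuousConstSMul T X]
    (hmin : ∀ x : X, Dense (orbit T x)) (hns : ¬IsSensitive T X)
    {ε : SetRel X X} (hε : ε ∈ 𝓤 X) : Syndetic {s : T | ∀ z : X, (z, s • z) ∈ ε} := by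
  obtain ⟨ε', hε', hε'closed, hε'ε⟩ := mem_uniformity_isClosed hε
  obtain ⟨Z, hZ, ⟨x, hx⟩, hZε'⟩ := exists_isOpen_forall_smul_mem_of_not_isSensitive hns hε'
  obtain ⟨F, hF⟩ := exists_finset_smul_mem_of_dense_orbit hmin hZ ⟨x, hx⟩
  refine ⟨F, F.finite_toSet.isCompact, fun t => ?_⟩
  obtain ⟨σ, hσF, hσ⟩ := hF (t • x)
  refine ⟨σ, hσF, fun z => hε'ε ?_⟩
  refine (hmin x).induction (P := fun z => (z, (σ * t) • z) ∈ ε') ?_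
    (hε'closed.preimage (continuous_id.prodMk (continuous_const_smul _))) z
  rintro _ ⟨r, rfl⟩
  rw [smul_comm]
  exact hZε' x hx _ (by rwa [mul_smul]) r

theorem dichotomy_syndetically_transitive_abelian_general
    {T X : Type*} [CommMonoid T] [TopologicalSpace T]
    [UniformSpace X] [CompactSpace X] [MulAction T X] [ContinuousSMul T X]
    (hsynd : ∀ U V : Set X, IsOpen U → U.Nonempty → IsOpen V → V.Nonempty →
      Syndetic (HittingTimes T U V)) :
    ((∀ x : X, Dense (MulAction.orbit T x)) ∧
      (∀ ε ∈ 𝓤 X, ∃ δ ∈ 𝓤 X, ∀ x y : X, (x, y) ∈ δ → ∀ t : T, (t • x, t • y) ∈ ε)) ∨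
    (∃ ε ∈ 𝓤 X, ∀ x : X, ∀ V ∈ 𝓝 x, ∃ y ∈ V, ∃ t : T, (t • x, t • y) ∉ ε) := by
  refine or_iff_not_imp_right.2 fun hns => ?_
  have hmin : ∀ x : X, Dense (orbit T x) := dense_orbit_of_isSyndeticallyTransitive hsynd hns
  have hequi : UniformEquicontinuous fun t : T => (t • · : X → X) :=
    uniformEquicontinuous_smul_of_syndetic fun _ hε =>
      syndetic_setOf_forall_mem_smul_of_dense_orbit hmin hns hε
  refine ⟨hmin, fun ε hε => ?_⟩
  obtain ⟨δ, hδ, hδε⟩ := (hequi ε hε).exists_mem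
  exact ⟨δ, hδ, fun x y hxy => hδε (x, y) hxy⟩

/-- Dichotomy theorem for abelian semigroup actions: a syndetically transitive topological
semiflow on a compact Hausdorff space with an abelian topological phase monoid is either
minimal and equicontinuous, or sensitive to initial conditions. -/
theorem dichotomy_syndetically_transitive_abelian
    {T X : Type*} [CommMonoid T] [TopologicalSpace T] [ContinuousMul T]
    [UniformSpace X] [CompactSpace X] [T2Space X] [MulAction T X] [ContinuousSMul T X]
    (hsynd : ∀ U V : Set X, IsOpen U → U.Nonempty → IsOpen V → V.Nonempty →
      Syndetic (HittingTimes T U V)) :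
    ((∀ x : X, Dense (MulAction.orbit T x)) ∧
      (∀ ε ∈ 𝓤 X, ∃ δ ∈ 𝓤 X, ∀ x y : X, (x, y) ∈ δ → ∀ t : T, (t • x, t • y) ∈ ε)) ∨
    (∃ ε ∈ 𝓤 X, ∀ x : X, ∀ V ∈ 𝓝 x, ∃ y ∈ V, ∃ t : T, (t • x, t • y) ∉ ε) :=
  dichotomy_syndetically_transitive_abelian_general hsynd
end

section
/- Let π : ℝ≥0 × X → X be a jointly continuous semiflow of the additive monoid ℝ≥0 (with its usual topology) on a Polish space X with at least two points. If the semiflow is topologically weakly mixing, then it is densely multi-dimensional Li-Yorke chaotic: for every increasing sequence F₁ ⊆ F₂ ⊆ ⋯ of compact subsets of ℝ≥0 there exists a dense uncountable set Θ ⊆ X such that for every k ≥ 2 and all pairwise distinct x₁,…,x_k ∈ Θ there exist a point p ∈ X and sequences (t_n), (s_n) in ℝ≥0 with s_n ∉ F_n for all n, such that π(t_n, x_i) → p for each i and π(s_n, x_i) → x_i for each i, as n → ∞. -/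
/-!
Weak mixing makes the sets of hitting times `N(U, V) = {t | U ∩ π t ⁻¹' V ≠ ∅}` of nonempty open
sets a filter base (Furstenberg's intersection lemma). Moreover each `N(U, V)` is unbounded: since
`π 0 = id`, some pair `(A, B)` has `N(A, B) ⊆ [δ, ∞)`, and a common time `b ∈ N(A, B)` with
`π b ⁻¹' V ≠ ∅` lets one push hitting times up by `δ`. So finitely many pairs of nonempty open
sets always share arbitrarily large hitting times.

With these, a countable forest of binary Cantor schemes of open sets is built stage by stage, one
tree rooted in each member of a countable π-base. At stage `n` every node splits into two disjoint
children; one common time `t n` maps all children into a small ball around a fixed point `a`, and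
one common time `s n`, beyond the compact set `F n`, maps each child back into its parent. The
branch points form a dense uncountable set `Θ`; all its points are proximal to `a` along `t n` and
return to themselves along `s n`, which is more than the multi-dimensional Li-Yorke condition asks.
-/

open Filter Topology Set Function
open scoped NNReal ENNReal

lemma tendsto_of_eventually_edist_le {α : Type*} [PseudoEMetricSpace α] {u : ℕ → α} {x : α}
    {ε : ℕ → ℝ≥0∞} (hε : Tendsto ε atTop (𝓝 0)) (h : ∀ᶠ n in atTop, edist (u n) x ≤ ε n) :
    Tendsto u atTop (𝓝 x) :=
  tendsto_iff_edist_tendsto_0.2 <| tendsto_of_tendsto_of_tendsto_of_le_of_le' tendsto_const_nhds hε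
    (Eventually.of_forall fun _ => zero_le) h

lemma not_countable_nat_bool : ¬ Countable (ℕ → Bool) := by
  rw [← Cardinal.mk_le_aleph0_iff]
  simpa using Cardinal.cantor Cardinal.aleph0

lemma exists_seq_isOpen_nonempty_subset (X : Type*) [TopologicalSpace X]
    [SecondCountableTopology X] [Nonempty X] :
    ∃ B : ℕ → Set X, (∀ n, IsOpen (B n) ∧ (B n).Nonempty) ∧
      ∀ U, IsOpen U → U.Nonempty → ∃ n, B n ⊆ U := by
  obtain ⟨b, hbc, hbe, hb⟩ := TopologicalSpace.exists_countable_basis X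
  obtain ⟨v, hv, -⟩ := hb.exists_subset_of_mem_open (mem_univ (Classical.arbitrary X)) isOpen_univ
  obtain ⟨B, rfl⟩ := hbc.exists_eq_range ⟨v, hv⟩
  refine ⟨B, fun n => ⟨hb.isOpen (mem_range_self n),
    nonempty_iff_ne_empty.2 fun h => hbe (h ▸ mem_range_self n)⟩, fun U hU hU' => ?_⟩
  obtain ⟨_, ⟨n, rfl⟩, -, hn⟩ := hb.exists_nonempty_subset hU' hU
  exact ⟨n, hn⟩

lemma IsOpen.exists_isOpen_closure_subset_ediam_le {X : Type*} [PseudoEMetricSpace X] {U : Set X}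
    (hU : IsOpen U) (hU' : U.Nonempty) {r : ℝ≥0∞} (hr : 0 < r) :
    ∃ V, IsOpen V ∧ V.Nonempty ∧ closure V ⊆ U ∧ Metric.ediam V ≤ r := by
  obtain ⟨x, hx⟩ := hU'
  obtain ⟨C, hC, hCc, hCU⟩ := exists_mem_nhds_isClosed_subset (hU.mem_nhds hx)
  refine ⟨interior C ∩ Metric.eball x (r / 2), isOpen_interior.inter Metric.isOpen_eball,
    ⟨x, mem_interior_iff_mem_nhds.2 hC, Metric.mem_eball_self (ENNReal.half_pos hr.ne')⟩,
    (closure_minimal (inter_subset_left.trans interior_subset) hCc).trans hCU, ?_⟩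
  calc Metric.ediam _ ≤ Metric.ediam (Metric.eball x (r / 2)) :=
        Metric.ediam_mono inter_subset_right
    _ ≤ 2 * (r / 2) := Metric.ediam_eball_le
    _ = r := ENNReal.mul_div_cancel two_ne_zero ENNReal.ofNat_ne_top

lemma IsOpen.exists_disjoint_isOpen_subsets {X : Type*} [TopologicalSpace X] [T2Space X]
    {U : Set X} (hU : IsOpen U) (hU' : U.Nontrivial) :
    ∃ P : Bool → Set X, Disjoint (P false) (P true) ∧
      ∀ b, IsOpen (P b) ∧ (P b).Nonempty ∧ P b ⊆ U := by
  obtain ⟨x, hx, y, hy, hxy⟩ := hU'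
  obtain ⟨u, v, hu, hv, hxu, hyv, huv⟩ := t2_separation hxy
  refine ⟨fun b => U ∩ cond b v u, huv.mono inter_subset_right inter_subset_right, ?_⟩
  rintro (_ | _)
  exacts [⟨hU.inter hu, ⟨x, hx, hxu⟩, inter_subset_left⟩,
    ⟨hU.inter hv, ⟨y, hy, hyv⟩, inter_subset_left⟩]

section Dynamics

variable {X : Type*} {π : ℝ≥0 → X → X}

def hittingTimes (π : ℝ≥0 → X → X) (U V : Set X) : Set ℝ≥0 :=
  {t | (U ∩ π t ⁻¹' V).Nonempty}

lemma add_mem_hittingTimes (hadd : ∀ s t : ℝ≥0, ∀ x : X, π s (π t x) = π (s + t) x)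
    {U V : Set X} {b t : ℝ≥0} (ht : t ∈ hittingTimes π U (π b ⁻¹' V)) :
    b + t ∈ hittingTimes π U V := by
  obtain ⟨x, hxU, hxV⟩ := ht
  exact ⟨x, hxU, by simpa only [mem_preimage, hadd] using hxV⟩

variable [TopologicalSpace X]

def IsTopologicallyWeaklyMixing (π : ℝ≥0 → X → X) : Prop :=
  ∀ W₁ W₂ : Set (X × X), IsOpen W₁ → W₁.Nonempty → IsOpen W₂ → W₂.Nonempty →
    ∃ t : ℝ≥0, ∃ w ∈ W₁, (π t w.1, π t w.2) ∈ W₂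

lemma exists_hittingTimes_subset_Ici [T2Space X] (hcont : Continuous (uncurry π))
    (hid : ∀ x, π 0 x = x) (hnontriv : ∃ a b : X, a ≠ b) :
    ∃ (A B : Set X) (δ : ℝ≥0), IsOpen A ∧ A.Nonempty ∧ IsOpen B ∧ B.Nonempty ∧ 0 < δ ∧
      hittingTimes π A B ⊆ Ici δ := by
  obtain ⟨a, b, hab⟩ := hnontriv
  obtain ⟨u, v, hu, hv, hau, hbv, huv⟩ := t2_separation hab
  have hmem : ((0 : ℝ≥0), a) ∈ uncurry π ⁻¹' u := by simpa [hid] using hau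
  obtain ⟨I, A, hI, hA, h0I, haA, hIA⟩ :=
    isOpen_prod_iff.1 (hu.preimage hcont) 0 a hmem
  obtain ⟨δ, hδ, hδI⟩ := nhds_bot_basis.mem_iff.1 (hI.mem_nhds h0I)
  refine ⟨A, v, δ, hA, ⟨a, haA⟩, hv, ⟨b, hbv⟩, hδ, ?_⟩
  rintro t ⟨x, hxA, hxv⟩
  by_contra htδ
  have hxu : π t x ∈ u := @hIA (t, x) ⟨hδI (not_le.1 htδ : t < δ), hxA⟩
  exact huv.notMem_of_mem_left hxu hxv

namespace IsTopologicallyWeaklyMixing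

lemma hittingTimes_nonempty (hwm : IsTopologicallyWeaklyMixing π) {U V : Set X}
    (hU : IsOpen U) (hU' : U.Nonempty) (hV : IsOpen V) (hV' : V.Nonempty) :
    (hittingTimes π U V).Nonempty := by
  obtain ⟨t, w, hw, hwt⟩ := hwm _ _ (hU.prod hU) (hU'.prod hU') (hV.prod hV) (hV'.prod hV')
  exact ⟨t, w.1, hw.1, hwt.1⟩

lemma nontrivial_of_isOpen [T2Space X] (hwm : IsTopologicallyWeaklyMixing π)
    (hnontriv : ∃ a b : X, a ≠ b) {U : Set X} (hU : IsOpen U) (hU' : U.Nonempty) :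
    U.Nontrivial := by
  by_contra hsub
  obtain ⟨a, b, hab⟩ := hnontriv
  obtain ⟨u, v, hu, hv, hau, hbv, huv⟩ := t2_separation hab
  obtain ⟨t, w, hw, hwu, hwv⟩ :=
    hwm _ _ (hU.prod hU) (hU'.prod hU') (hu.prod hv) ⟨(a, b), hau, hbv⟩
  rw [not_nontrivial_iff.1 hsub hw.1 hw.2] at hwu
  exact huv.notMem_of_mem_left hwu hwv

lemma exists_hittingTimes_subset_inter (hwm : IsTopologicallyWeaklyMixing π)
    (hcont : ∀ t, Continuous (π t)) (hadd : ∀ s t : ℝ≥0, ∀ x : X, π s (π t x) = π (s + t) x)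
    {U₁ V₁ U₂ V₂ : Set X} (hU₁ : IsOpen U₁) (hU₁' : U₁.Nonempty) (hV₁ : IsOpen V₁)
    (hV₁' : V₁.Nonempty) (hU₂ : IsOpen U₂) (hU₂' : U₂.Nonempty) (hV₂ : IsOpen V₂)
    (hV₂' : V₂.Nonempty) :
    ∃ U V : Set X, IsOpen U ∧ U.Nonempty ∧ IsOpen V ∧ V.Nonempty ∧
      hittingTimes π U V ⊆ hittingTimes π U₁ V₁ ∩ hittingTimes π U₂ V₂ := by
  obtain ⟨r, w, hw, hwr⟩ :=
    hwm _ _ (hU₁.prod hV₁) (hU₁'.prod hV₁') (hU₂.prod hV₂) (hU₂'.prod hV₂')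
  refine ⟨U₁ ∩ π r ⁻¹' U₂, V₁ ∩ π r ⁻¹' V₂, hU₁.inter (hU₂.preimage (hcont r)),
    ⟨w.1, hw.1, hwr.1⟩, hV₁.inter (hV₂.preimage (hcont r)), ⟨w.2, hw.2, hwr.2⟩, ?_⟩
  rintro t ⟨x, ⟨hxU₁, hxU₂⟩, hxV₁, hxV₂⟩
  refine ⟨⟨x, hxU₁, hxV₁⟩, π r x, hxU₂, ?_⟩
  rw [mem_preimage, hadd, add_comm, ← hadd]
  exact hxV₂

lemma exists_hittingTimes_subset_biInter [Nonempty X] (hwm : IsTopologicallyWeaklyMixing π)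
    (hcont : ∀ t, Continuous (π t)) (hadd : ∀ s t : ℝ≥0, ∀ x : X, π s (π t x) = π (s + t) x)
    {ι : Type*} {S : Set ι} (hS : S.Finite) {U V : ι → Set X}
    (hU : ∀ i ∈ S, IsOpen (U i) ∧ (U i).Nonempty) (hV : ∀ i ∈ S, IsOpen (V i) ∧ (V i).Nonempty) :
    ∃ U₀ V₀ : Set X, IsOpen U₀ ∧ U₀.Nonempty ∧ IsOpen V₀ ∧ V₀.Nonempty ∧
      hittingTimes π U₀ V₀ ⊆ ⋂ i ∈ S, hittingTimes π (U i) (V i) := by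
  classical
  obtain ⟨S, rfl⟩ := hS.exists_finset_coe
  induction S using Finset.induction_on with
  | empty => exact ⟨univ, univ, isOpen_univ, univ_nonempty, isOpen_univ, univ_nonempty, by simp⟩
  | insert j S _ ih =>
    simp only [Finset.coe_insert, mem_insert_iff, forall_eq_or_imp] at hU hV ⊢
    obtain ⟨U₀, V₀, hU₀, hU₀', hV₀, hV₀', hsub⟩ := ih S.finite_toSet hU.2 hV.2
    obtain ⟨U₁, V₁, hU₁, hU₁', hV₁, hV₁', hsub₁⟩ := hwm.exists_hittingTimes_subset_inter hcont
      hadd hU.1.1 hU.1.2 hV.1.1 hV.1.2 hU₀ hU₀' hV₀ hV₀'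
    refine ⟨U₁, V₁, hU₁, hU₁', hV₁, hV₁', fun t ht => ?_⟩
    simp only [mem_iInter, forall_eq_or_imp]
    exact ⟨(hsub₁ ht).1, fun i hi => mem_iInter₂.1 (hsub (hsub₁ ht).2) i hi⟩

lemma exists_mem_hittingTimes_forall_preimage_nonempty [Nonempty X]
    (hwm : IsTopologicallyWeaklyMixing π) (hcont : ∀ t, Continuous (π t))
    (hadd : ∀ s t : ℝ≥0, ∀ x : X, π s (π t x) = π (s + t) x) {A B : Set X} (hA : IsOpen A)
    (hA' : A.Nonempty) (hB : IsOpen B) (hB' : B.Nonempty) {ι : Type*} {S : Set ι}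
    (hS : S.Finite) {V : ι → Set X} (hV : ∀ i ∈ S, IsOpen (V i) ∧ (V i).Nonempty) :
    ∃ b ∈ hittingTimes π A B, ∀ i ∈ S, (π b ⁻¹' V i).Nonempty := by
  obtain ⟨U₀, V₀, hU₀, hU₀', hV₀, hV₀', hsub⟩ :=
    hwm.exists_hittingTimes_subset_biInter hcont hadd hS (U := fun _ => univ)
      (fun _ _ => ⟨isOpen_univ, univ_nonempty⟩) hV
  obtain ⟨U₁, V₁, hU₁, hU₁', hV₁, hV₁', hsub₁⟩ :=
    hwm.exists_hittingTimes_subset_inter hcont hadd hA hA' hB hB' hU₀ hU₀' hV₀ hV₀'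
  obtain ⟨b, hb⟩ := hwm.hittingTimes_nonempty hU₁ hU₁' hV₁ hV₁'
  exact ⟨b, (hsub₁ hb).1, fun i hi =>
    (mem_iInter₂.1 (hsub (hsub₁ hb).2) i hi).mono inter_subset_right⟩

lemma exists_lt_mem_biInter_hittingTimes [T2Space X] (hwm : IsTopologicallyWeaklyMixing π)
    (hcont : Continuous (uncurry π)) (hid : ∀ x, π 0 x = x)
    (hadd : ∀ s t : ℝ≥0, ∀ x : X, π s (π t x) = π (s + t) x) (hnontriv : ∃ a b : X, a ≠ b)
    {ι : Type*} {S : Set ι} (hS : S.Finite) {U V : ι → Set X}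
    (hU : ∀ i ∈ S, IsOpen (U i) ∧ (U i).Nonempty) (hV : ∀ i ∈ S, IsOpen (V i) ∧ (V i).Nonempty)
    (c : ℝ≥0) :
    ∃ t, c < t ∧ t ∈ ⋂ i ∈ S, hittingTimes π (U i) (V i) := by
  have : Nonempty X := ⟨hnontriv.choose⟩
  have hcont' : ∀ t, Continuous (π t) := fun t => hcont.uncurry_left t
  obtain ⟨A, B, δ, hA, hA', hB, hB', hδ, hAB⟩ := exists_hittingTimes_subset_Ici hcont hid hnontriv
  have key : ∀ n : ℕ, ∀ V : ι → Set X, (∀ i ∈ S, IsOpen (V i) ∧ (V i).Nonempty) →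
      ∃ t, n * δ ≤ t ∧ t ∈ ⋂ i ∈ S, hittingTimes π (U i) (V i) := by
    intro n
    induction n with
    | zero =>
      intro V hV
      obtain ⟨U₀, V₀, hU₀, hU₀', hV₀, hV₀', hsub⟩ :=
        hwm.exists_hittingTimes_subset_biInter hcont' hadd hS hU hV
      obtain ⟨t, ht⟩ := hwm.hittingTimes_nonempty hU₀ hU₀' hV₀ hV₀'
      exact ⟨t, by simp, hsub ht⟩
    | succ n ih =>
      intro V hV
      -- reach `π b ⁻¹' V i` after a time `≥ n δ`, then flow on for the time `b ≥ δ`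
      obtain ⟨b, hb, hbV⟩ :=
        hwm.exists_mem_hittingTimes_forall_preimage_nonempty hcont' hadd hA hA' hB hB' hS hV
      obtain ⟨t, hnt, ht⟩ :=
        ih (fun i => π b ⁻¹' V i) fun i hi => ⟨(hV i hi).1.preimage (hcont' b), hbV i hi⟩
      refine ⟨b + t, ?_,
        mem_iInter₂.2 fun i hi => add_mem_hittingTimes hadd (mem_iInter₂.1 ht i hi)⟩
      calc ((n + 1 : ℕ) : ℝ≥0) * δ = δ + n * δ := by push_cast; ring
        _ ≤ b + t := add_le_add (hAB hb) hnt
  obtain ⟨n, hn⟩ := exists_nat_gt (c / δ)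
  obtain ⟨t, hnt, ht⟩ := key n V hV
  exact ⟨t, ((div_lt_iff₀ hδ).1 hn).trans_le hnt, ht⟩

end IsTopologicallyWeaklyMixing

end Dynamics

theorem IsTopologicallyWeaklyMixing.exists_refinement {X : Type*} [EMetricSpace X]
    {π : ℝ≥0 → X → X} (hwm : IsTopologicallyWeaklyMixing π)
    (hcont : Continuous (uncurry π)) (hid : ∀ x, π 0 x = x)
    (hadd : ∀ s t : ℝ≥0, ∀ x : X, π s (π t x) = π (s + t) x) (hnontriv : ∃ a b : X, a ≠ b)
    {ι : Type*} {S : Set ι} (hS : S.Finite) {V : ι → Set X}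
    (hV : ∀ i ∈ S, IsOpen (V i) ∧ (V i).Nonempty) (a : X) {r : ℝ≥0∞} (hr : 0 < r) (c : ℝ≥0) :
    ∃ (τ σ : ℝ≥0) (W : ι → Bool → Set X), c < σ ∧ ∀ i ∈ S,
      Disjoint (W i false) (W i true) ∧ ∀ b, IsOpen (W i b) ∧ (W i b).Nonempty ∧
        closure (W i b) ⊆ V i ∧ Metric.ediam (W i b) ≤ r ∧
        MapsTo (π τ) (W i b) (Metric.eball a r) ∧ MapsTo (π σ) (W i b) (V i) := by
  choose! P hPdisj hP using fun i hi => (hV i hi).1.exists_disjoint_isOpen_subsets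
    (hwm.nontrivial_of_isOpen hnontriv (hV i hi).1 (hV i hi).2)
  have hS₂ : (S ×ˢ univ : Set (ι × Bool)).Finite := hS.prod finite_univ
  obtain ⟨τ, -, hτ⟩ := hwm.exists_lt_mem_biInter_hittingTimes hcont hid hadd hnontriv hS₂
    (U := fun p => P p.1 p.2) (V := fun _ => Metric.eball a r)
    (fun p hp => ⟨(hP p.1 hp.1 p.2).1, (hP p.1 hp.1 p.2).2.1⟩)
    (fun _ _ => ⟨Metric.isOpen_eball, a, Metric.mem_eball_self hr⟩) 0
  set Q : ι × Bool → Set X := fun p => P p.1 p.2 ∩ π τ ⁻¹' Metric.eball a r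
  have hQ : ∀ p ∈ S ×ˢ univ, IsOpen (Q p) ∧ (Q p).Nonempty := fun p hp =>
    ⟨(hP p.1 hp.1 p.2).1.inter (Metric.isOpen_eball.preimage (hcont.uncurry_left τ)),
      mem_iInter₂.1 hτ p hp⟩
  obtain ⟨σ, hcσ, hσ⟩ := hwm.exists_lt_mem_biInter_hittingTimes hcont hid hadd hnontriv hS₂ hQ hQ c
  choose! W hW using fun p (hp : p ∈ S ×ˢ univ) =>
    IsOpen.exists_isOpen_closure_subset_ediam_le
      ((hQ p hp).1.inter ((hQ p hp).1.preimage (hcont.uncurry_left σ))) (mem_iInter₂.1 hσ p hp) hr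
  have hWQ : ∀ i ∈ S, ∀ b, W (i, b) ⊆ Q (i, b) ∩ π σ ⁻¹' Q (i, b) := fun i hi b =>
    subset_closure.trans (hW (i, b) ⟨hi, trivial⟩).2.2.1
  refine ⟨τ, σ, fun i b => W (i, b), hcσ, fun i hi => ⟨?_, fun b => ?_⟩⟩
  · exact (hPdisj i hi).mono (fun x hx => (hWQ i hi false hx).1.1)
      (fun x hx => (hWQ i hi true hx).1.1)
  · obtain ⟨hWo, hWne, hWcl, hWd⟩ := hW (i, b) ⟨hi, trivial⟩
    exact ⟨hWo, hWne,
      hWcl.trans (inter_subset_left.trans (inter_subset_left.trans (hP i hi b).2.2)), hWd,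
      fun x hx => (hWQ i hi b hx).1.2, fun x hx => (hP i hi b).2.2 (hWQ i hi b hx).2.1⟩

section Forest

variable {X : Type*}

/-- Nodes `(m, l)` of a countable forest of binary trees: `m` names the tree and `l` is the
branch from its root, most recent choice first (the convention of `PiNat.res`). The node is
built at stage `m + l.length`, and `t n`, `s n` are the times chosen at stage `n`. -/
structure LiYorkeForest [PseudoEMetricSpace X] (π : ℝ≥0 → X → X) (a : X) (ε : ℕ → ℝ≥0∞)
    (B : ℕ → Set X) (c : ℕ → ℝ≥0) where
  U : ℕ × List Bool → Set X
  t : ℕ → ℝ≥0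
  s : ℕ → ℝ≥0
  nonempty : ∀ p, (U p).Nonempty
  closure_subset : ∀ m l b, closure (U (m, b :: l)) ⊆ U (m, l)
  disjoint : ∀ m l, Disjoint (U (m, false :: l)) (U (m, true :: l))
  ediam_le : ∀ m l, Metric.ediam (U (m, l)) ≤ ε (m + l.length)
  root_subset : ∀ m, U (m, []) ⊆ B m
  mapsTo_t : ∀ m l b,
    MapsTo (π (t (m + l.length))) (U (m, b :: l)) (Metric.eball a (ε (m + l.length + 1)))
  mapsTo_s : ∀ m l b, MapsTo (π (s (m + l.length))) (U (m, b :: l)) (U (m, l))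
  lt_s : ∀ n, c n < s n

def stageNodes (n : ℕ) : Set (ℕ × List Bool) := {p | p.1 + p.2.length = n}

lemma stageNodes_finite (n : ℕ) : (stageNodes n).Finite :=
  ((finite_Iic n).prod (List.finite_length_le Bool n)).subset fun p (hp : _ = n) =>
    ⟨show p.1 ≤ n by omega, show p.2.length ≤ n by omega⟩

/-- Stage `n` of the inductive construction: the roots come from `R`, and `W` refines the
nodes of stage `n` into their two children. -/
def forestStages (R : ℕ → Set X)
    (W : ℕ → (ℕ × List Bool → Set X) → ℕ × List Bool → Bool → Set X) :
    ℕ → ℕ × List Bool → Set X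
  | 0, p => R p.1
  | _ + 1, (m, []) => R m
  | n + 1, (m, b :: l) => W n (forestStages R W n) (m, l) b

lemma forestStages_root (R : ℕ → Set X) (W) (m : ℕ) : forestStages R W m (m, []) = R m := by
  cases m <;> rfl

theorem IsTopologicallyWeaklyMixing.nonempty_liYorkeForest [MetricSpace X]
    {π : ℝ≥0 → X → X} (hwm : IsTopologicallyWeaklyMixing π)
    (hcont : Continuous (uncurry π)) (hid : ∀ x, π 0 x = x)
    (hadd : ∀ s t : ℝ≥0, ∀ x : X, π s (π t x) = π (s + t) x) (hnontriv : ∃ a b : X, a ≠ b)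
    (a : X) {ε : ℕ → ℝ≥0∞} (hε : ∀ n, 0 < ε n) {B : ℕ → Set X}
    (hB : ∀ m, IsOpen (B m) ∧ (B m).Nonempty) (c : ℕ → ℝ≥0) :
    Nonempty (LiYorkeForest π a ε B c) := by
  choose R hR using fun m => (hB m).1.exists_isOpen_closure_subset_ediam_le (hB m).2 (hε m)
  choose! τ σ W hW using fun n (f : ℕ × List Bool → Set X)
    (hf : ∀ p ∈ stageNodes n, IsOpen (f p) ∧ (f p).Nonempty) =>
    hwm.exists_refinement hcont hid hadd hnontriv (stageNodes_finite n) hf a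
      (hε (n + 1)) (c n)
  set G := forestStages R W
  have hG : ∀ n, ∀ p ∈ stageNodes n, IsOpen (G n p) ∧ (G n p).Nonempty := by
    intro n
    induction n with
    | zero => exact fun p _ => ⟨(hR p.1).1, (hR p.1).2.1⟩
    | succ n ih =>
      rintro ⟨m, _ | ⟨b, l⟩⟩ hp
      · exact ⟨(hR m).1, (hR m).2.1⟩
      · exact ((hW n (G n) ih).2 (m, l) (Nat.succ.inj hp) |>.2 b).imp id And.left
  have hstep := fun n => hW n (G n) (hG n)
  have hroot : ∀ m, G m (m, []) = R m := forestStages_root R W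
  refine ⟨{ U := fun p => G (p.1 + p.2.length) p
            t := fun n => τ n (G n)
            s := fun n => σ n (G n)
            nonempty := fun p => (hG _ p rfl).2
            closure_subset := fun m l b => ((hstep _).2 (m, l) rfl).2 b |>.2.2.1
            disjoint := fun m l => ((hstep _).2 (m, l) rfl).1
            ediam_le := ?_
            root_subset := fun m => ?_
            mapsTo_t := fun m l b => ((hstep _).2 (m, l) rfl).2 b |>.2.2.2.2.1
            mapsTo_s := fun m l b => ((hstep _).2 (m, l) rfl).2 b |>.2.2.2.2.2
            lt_s := fun n => (hstep n).1 }⟩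
  · rintro m (_ | ⟨b, l⟩)
    · simpa [hroot] using (hR m).2.2.2
    · exact ((hstep _).2 (m, l) rfl).2 b |>.2.2.2.1
  · simpa [hroot] using subset_closure.trans (hR m).2.2.1

namespace LiYorkeForest

open CantorScheme PiNat

variable [MetricSpace X] {π : ℝ≥0 → X → X} {a : X} {ε : ℕ → ℝ≥0∞} {B : ℕ → Set X}
  {c : ℕ → ℝ≥0} (T : LiYorkeForest π a ε B c)

def tree (m : ℕ) (l : List Bool) : Set X := T.U (m, l)

lemma disjoint_tree (m : ℕ) : CantorScheme.Disjoint (T.tree m) := by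
  rintro l (_ | _) (_ | _) h
  exacts [(h rfl).elim, T.disjoint m l, (T.disjoint m l).symm, (h rfl).elim]

lemma vanishingDiam_tree (hε : Tendsto ε atTop (𝓝 0)) (m : ℕ) :
    VanishingDiam (T.tree m) := fun ω =>
  tendsto_of_tendsto_of_tendsto_of_le_of_le tendsto_const_nhds
    ((tendsto_add_atTop_iff_nat m).2 hε) (fun _ => zero_le) fun n => by
    simpa [tree, add_comm] using T.ediam_le m (res ω n)

variable [CompleteSpace X]

lemma inducedMap_tree_domain (hε : Tendsto ε atTop (𝓝 0)) (m : ℕ) :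
    (inducedMap (T.tree m)).1 = univ :=
  ClosureAntitone.map_of_vanishingDiam (T.vanishingDiam_tree hε m)
    (fun l b => T.closure_subset m l b) fun _ => T.nonempty _

noncomputable def point (hε : Tendsto ε atTop (𝓝 0)) (m : ℕ) (ω : ℕ → Bool) : X :=
  (inducedMap (T.tree m)).2 ⟨ω, T.inducedMap_tree_domain hε m ▸ mem_univ ω⟩

lemma point_mem (hε : Tendsto ε atTop (𝓝 0)) (m : ℕ) (ω : ℕ → Bool) (k : ℕ) :
    T.point hε m ω ∈ T.U (m, res ω k) :=
  map_mem _ k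

lemma point_injective (hε : Tendsto ε atTop (𝓝 0)) (m : ℕ) : Injective (T.point hε m) :=
  fun _ _ h => congrArg Subtype.val ((T.disjoint_tree m).map_injective h)

lemma tendsto_t (hε : Tendsto ε atTop (𝓝 0)) (m : ℕ) (ω : ℕ → Bool) :
    Tendsto (fun n => π (T.t n) (T.point hε m ω)) atTop (𝓝 a) := by
  refine tendsto_of_eventually_edist_le ((tendsto_add_atTop_iff_nat 1).2 hε) ?_
  filter_upwards [eventually_ge_atTop m] with n hn
  obtain ⟨k, rfl⟩ := Nat.exists_eq_add_of_le hn
  have h := T.mapsTo_t m (res ω k) (ω k) (T.point_mem hε m ω (k + 1))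
  rw [res_length] at h
  exact (Metric.mem_eball.1 h).le

lemma tendsto_s (hε : Tendsto ε atTop (𝓝 0)) (m : ℕ) (ω : ℕ → Bool) :
    Tendsto (fun n => π (T.s n) (T.point hε m ω)) atTop (𝓝 (T.point hε m ω)) := by
  refine tendsto_of_eventually_edist_le hε ?_
  filter_upwards [eventually_ge_atTop m] with n hn
  obtain ⟨k, rfl⟩ := Nat.exists_eq_add_of_le hn
  have h := T.mapsTo_s m (res ω k) (ω k) (T.point_mem hε m ω (k + 1))
  rw [res_length] at h
  calc edist _ _ ≤ Metric.ediam (T.U (m, res ω k)) :=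
        Metric.edist_le_ediam_of_mem h (T.point_mem hε m ω k)
    _ ≤ ε (m + k) := by simpa using T.ediam_le m (res ω k)

lemma dense_range_point (hε : Tendsto ε atTop (𝓝 0))
    (hB : ∀ U, IsOpen U → U.Nonempty → ∃ m, B m ⊆ U) :
    Dense (range (uncurry (T.point hε))) := by
  refine dense_iff_inter_open.2 fun V hV hV' => ?_
  obtain ⟨m, hm⟩ := hB V hV hV'
  exact ⟨T.point hε m fun _ => false, hm (T.root_subset m (T.point_mem hε m _ 0)), (m, _), rfl⟩

lemma not_countable_range_point (hε : Tendsto ε atTop (𝓝 0)) :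
    ¬ (range (uncurry (T.point hε))).Countable := fun h =>
  not_countable_nat_bool <| countable_univ_iff.1 <|
    MapsTo.countable_of_injOn (t := range (uncurry (T.point hε))) (fun ω _ => ⟨(0, ω), rfl⟩)
      (T.point_injective hε 0).injOn h

end LiYorkeForest

end Forest

/-- A topologically weakly mixing jointly continuous semiflow `π : ℝ≥0 × X → X` on a
Polish space with at least two points is densely multi-dimensional Li-Yorke chaotic. -/
theorem c0_weaklyMixing_densely_multidimensional_LiYorke
    {X : Type*} [TopologicalSpace X] [PolishSpace X]
    (hnontriv : ∃ a b : X, a ≠ b)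
    (π : NNReal → X → X)
    (hcont : Continuous fun q : NNReal × X => π q.1 q.2)
    (hid : ∀ x : X, π 0 x = x)
    (hadd : ∀ s t : NNReal, ∀ x : X, π s (π t x) = π (s + t) x)
    (hwm : ∀ W₁ W₂ : Set (X × X), IsOpen W₁ → W₁.Nonempty → IsOpen W₂ → W₂.Nonempty →
      ∃ t : NNReal, ∃ w ∈ W₁, (π t w.1, π t w.2) ∈ W₂) :
    ∀ F : ℕ → Set NNReal, (∀ n, IsCompact (F n)) → Monotone F →
      ∃ Θ : Set X, Dense Θ ∧ ¬ Θ.Countable ∧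
        ∀ k : ℕ, 2 ≤ k → ∀ z : Fin k → X, (∀ i, z i ∈ Θ) → Function.Injective z →
          ∃ p : X, ∃ t s : ℕ → NNReal, (∀ n, s n ∉ F n) ∧
            (∀ i, Tendsto (fun n => π (t n) (z i)) atTop (𝓝 p)) ∧
            (∀ i, Tendsto (fun n => π (s n) (z i)) atTop (𝓝 (z i))) := by
  intro F hF _
  let := TopologicalSpace.upgradeIsCompletelyMetrizable X
  obtain ⟨a, b, hab⟩ := hnontriv
  have : Nonempty X := ⟨a⟩
  obtain ⟨B, hB, hBU⟩ := exists_seq_isOpen_nonempty_subset X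
  choose c hc using fun n => (hF n).bddAbove
  have hε : Tendsto (fun n : ℕ => (n : ℝ≥0∞)⁻¹) atTop (𝓝 0) := ENNReal.tendsto_inv_nat_nhds_zero
  obtain ⟨T⟩ := IsTopologicallyWeaklyMixing.nonempty_liYorkeForest hwm hcont hid hadd ⟨a, b, hab⟩ a
    (fun n => ENNReal.inv_pos.2 (ENNReal.natCast_ne_top n)) hB c
  refine ⟨range (uncurry (T.point hε)), T.dense_range_point hε hBU, T.not_countable_range_point hε,
    fun k _ z hz _ => ⟨a, T.t, T.s, fun n hn => (hc n hn).not_gt (T.lt_s n), fun i => ?_,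
      fun i => ?_⟩⟩
  · obtain ⟨⟨m, ω⟩, hmω⟩ := hz i
    exact hmω ▸ T.tendsto_t hε m ω
  · obtain ⟨⟨m, ω⟩, hmω⟩ := hz i
    exact hmω ▸ T.tendsto_s hε m ω
end
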